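/- arXiv:2307.15389 — 3 statements merged into one kernel-verified Lean document; each statement's English description precedes it below -/
import Mathlib

section
/- Let Ω be a nonempty subset of ℝ^s, let C ⊆ ℝ^s be a nonempty closed convex set, let x̄ ∈ Ω ∩ C, and suppose Ω is locally closed around x̄. Then N^p_C(x̄,Ω) = {x* ∈ ℝ^s : ∃ θ > 0, δ > 0, p > 0 such that x̄ + p x* ∈ C and ⟨x*, x − x̄⟩ ≤ δ‖x − x̄‖² for all x ∈ Ω ∩ C ∩ B̄(x̄,θ)}. -/
open Set Metric Filter Topology
open scoped RealInnerProductSpace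

variable {E : Type*} [NormedAddCommGroup E] [InnerProductSpace ℝ E]
variable {F' : Type*} [NormedAddCommGroup F'] [InnerProductSpace ℝ F']

/-- `Π(x,Ω)`: the set of closest points (Euclidean projectors) of `x` in `Ω`. -/
def projSet (x : E) (Ω : Set E) : Set E := {u | u ∈ Ω ∧ ‖u - x‖ = Metric.infDist x Ω}

/-- `Π⁻¹(u,Ω)`. -/
def projInv (u : E) (Ω : Set E) : Set E := {x | u ∈ projSet x Ω}

/-- The proximal normal cone to `Ω` at `x` with respect to `C`:
`N^p_C(x,Ω) = {v | ∃ t > 0, x + t v ∈ Π⁻¹(x, Ω ∩ C) ∩ C}`. -/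
def proxNC (C Ω : Set E) (x : E) : Set E :=
  {v | ∃ t > (0 : ℝ), x + t • v ∈ projInv x (Ω ∩ C) ∩ C}

/-- The limiting normal cone to `Ω` at `x` with respect to `C`
(sequential Painlevé–Kuratowski outer limit of `N^p_C(·,Ω)` over `Ω ∩ C ∋ x_k → x`). -/
def limNC (C Ω : Set E) (x : E) : Set E :=
  {v | ∃ (xs vs : ℕ → E),
    (∀ k, xs k ∈ Ω ∩ C) ∧ Filter.Tendsto xs Filter.atTop (nhds x) ∧
    (∀ k, vs k ∈ proxNC C Ω (xs k)) ∧ Filter.Tendsto vs Filter.atTop (nhds v)}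

/-!
Since `x̄ ∈ Ω ∩ C`, the point `x̄ + t v` projects onto `x̄` exactly when
`‖t v‖² ≤ ‖x - x̄ - t v‖²`, i.e. `2 t ⟪v, x - x̄⟫ ≤ ‖x - x̄‖²`, for every `x ∈ Ω ∩ C`.
This global inequality gives the local one with `δ = 1/(2t)`. Conversely, a local inequality with
constants `θ, δ` becomes global for any `t > 0` with `2tδ ≤ 1` and `2t‖v‖ ≤ θ`: near `x̄` use the
local bound, and for `‖x - x̄‖ > θ` use Cauchy–Schwarz. Convexity of `C` keeps `x̄ + t v` in `C`
once `t ≤ p`.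
-/

theorem mem_projSet_iff {G : Type*} [NormedAddCommGroup G] {S : Set G} {u y : G}
    (hu : u ∈ S) :
    u ∈ projSet y S ↔ ∀ x ∈ S, ‖u - y‖ ≤ ‖x - y‖ := by
  simp only [projSet, mem_ofPred_eq, hu, true_and, ← dist_eq_norm, dist_comm _ y]
  exact ⟨fun h x hx => h ▸ infDist_le_dist_of_mem hx,
    fun h => le_antisymm ((le_infDist ⟨u, hu⟩).2 h) (infDist_le_dist_of_mem hu)⟩

theorem add_smul_mem_projInv_iff {S : Set E} {xb v : E} {t : ℝ} (hxb : xb ∈ S) :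
    xb + t • v ∈ projInv xb S ↔ ∀ x ∈ S, 2 * t * ⟪v, x - xb⟫ ≤ ‖x - xb‖ ^ 2 := by
  refine (mem_projSet_iff hxb).trans (forall₂_congr fun x _ => ?_)
  have hsq : ‖x - (xb + t • v)‖ ^ 2 = ‖x - xb‖ ^ 2 - 2 * t * ⟪v, x - xb⟫ + ‖t • v‖ ^ 2 := by
    rw [← sub_sub, norm_sub_sq_real, real_inner_smul_right, real_inner_comm]
    ring
  rw [show xb - (xb + t • v) = -(t • v) by abel, norm_neg, ← sq_le_sq₀ (norm_nonneg _)
    (norm_nonneg _), hsq]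
  constructor <;> intro h <;> linarith

theorem two_mul_inner_le_norm_sq_of_forall_mem_closedBall {S : Set E} {xb v : E}
    {θ δ t : ℝ} (hlocal : ∀ x ∈ S ∩ closedBall xb θ, ⟪v, x - xb⟫ ≤ δ * ‖x - xb‖ ^ 2)
    (ht : 0 ≤ t) (htδ : 2 * t * δ ≤ 1) (htθ : 2 * t * ‖v‖ ≤ θ) :
    ∀ x ∈ S, 2 * t * ⟪v, x - xb⟫ ≤ ‖x - xb‖ ^ 2 := by
  intro x hx
  by_cases hxθ : ‖x - xb‖ ≤ θ
  · have hin := hlocal x ⟨hx, by rwa [mem_closedBall, dist_eq_norm]⟩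
    calc 2 * t * ⟪v, x - xb⟫ ≤ 2 * t * (δ * ‖x - xb‖ ^ 2) :=
          mul_le_mul_of_nonneg_left hin (by positivity)
      _ = (2 * t * δ) * ‖x - xb‖ ^ 2 := by ring
      _ ≤ ‖x - xb‖ ^ 2 := mul_le_of_le_one_left (sq_nonneg _) htδ
  · replace hxθ := not_le.1 hxθ
    calc 2 * t * ⟪v, x - xb⟫ ≤ 2 * t * (‖v‖ * ‖x - xb‖) := by
          gcongr; exact real_inner_le_norm _ _
      _ = (2 * t * ‖v‖) * ‖x - xb‖ := by ring
      _ ≤ ‖x - xb‖ * ‖x - xb‖ := by gcongr; linarith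
      _ = ‖x - xb‖ ^ 2 := by ring

theorem Convex.add_smul_mem_of_le {C : Set E} (hC : Convex ℝ C) {x v : E} {p t : ℝ}
    (hx : x ∈ C) (hpC : x + p • v ∈ C) (hp : 0 < p) (ht : 0 ≤ t) (htp : t ≤ p) :
    x + t • v ∈ C := by
  have h := hC.add_smul_mem hx hpC ⟨div_nonneg ht hp.le, (div_le_one hp).2 htp⟩
  rwa [smul_smul, div_mul_cancel₀ t hp.ne'] at h

theorem exists_pos_le_and_mul_le {p a b : ℝ} (hp : 0 < p) (ha : 0 < a) (hb : 0 < b) (c d : ℝ) :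
    ∃ t > 0, t ≤ p ∧ t * c ≤ a ∧ t * d ≤ b := by
  have hsmall : ∀ᶠ t in 𝓝 (0 : ℝ), t ≤ p ∧ t * c ≤ a ∧ t * d ≤ b := by
    refine (eventually_le_nhds hp).and ((Tendsto.eventually ?_ (eventually_le_nhds ha)).and
      (Tendsto.eventually ?_ (eventually_le_nhds hb)))
    · simpa using (continuous_id.mul continuous_const).tendsto (0 : ℝ) (f := fun t => t * c)
    · simpa using (continuous_id.mul continuous_const).tendsto (0 : ℝ) (f := fun t => t * d)
  obtain ⟨t, hsmallt, htpos⟩ := ((hsmall.filter_mono nhdsWithin_le_nhds).and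
    (self_mem_nhdsWithin : Ioi (0 : ℝ) ∈ 𝓝[>] 0)).exists
  exact ⟨t, htpos, hsmallt⟩

theorem stmt2_general {s : ℕ} (Ω C : Set (EuclideanSpace ℝ (Fin s))) (hCcv : Convex ℝ C)
    (xb : EuclideanSpace ℝ (Fin s)) (hxb : xb ∈ Ω ∩ C) :
    proxNC C Ω xb =
      {v | ∃ θ > (0 : ℝ), ∃ δ > (0 : ℝ), ∃ p > (0 : ℝ), xb + p • v ∈ C ∧
        ∀ x ∈ Ω ∩ C ∩ Metric.closedBall xb θ, ⟪v, x - xb⟫ ≤ δ * ‖x - xb‖ ^ 2} := by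
  ext v
  constructor
  · rintro ⟨t, ht, hproj, htC⟩
    refine ⟨1, one_pos, 1 / (2 * t), by positivity, t, ht, htC, fun x hx => ?_⟩
    have h := (add_smul_mem_projInv_iff hxb).1 hproj x hx.1
    rw [div_mul_eq_mul_div, one_mul, le_div_iff₀ (by positivity)]
    linarith
  · rintro ⟨θ, hθ, δ, -, p, hp, hpC, hlocal⟩
    obtain ⟨t, ht, htp, htδ, htθ⟩ := exists_pos_le_and_mul_le hp one_pos hθ (2 * δ) (2 * ‖v‖)
    refine ⟨t, ht, (add_smul_mem_projInv_iff hxb).2 ?_,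
      hCcv.add_smul_mem_of_le hxb.2 hpC hp ht.le htp⟩
    exact two_mul_inner_le_norm_sq_of_forall_mem_closedBall hlocal ht.le
      (by linarith) (by linarith)

/-- Proposition 1(ii), localized formula. -/
theorem stmt2 {s : ℕ} (Ω C : Set (EuclideanSpace ℝ (Fin s))) (hΩne : Ω.Nonempty)
    (hCne : C.Nonempty) (hCcl : IsClosed C) (hCcv : Convex ℝ C)
    (xb : EuclideanSpace ℝ (Fin s)) (hxb : xb ∈ Ω ∩ C)
    (hloc : ∃ r > (0 : ℝ), IsClosed (Ω ∩ Metric.closedBall xb r)) :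
    proxNC C Ω xb =
      {v | ∃ θ > (0 : ℝ), ∃ δ > (0 : ℝ), ∃ p > (0 : ℝ), xb + p • v ∈ C ∧
        ∀ x ∈ Ω ∩ C ∩ Metric.closedBall xb θ, ⟪v, x - xb⟫ ≤ δ * ‖x - xb‖ ^ 2} :=
  stmt2_general Ω C hCcv xb hxb
end

section
/- Let Ω be a nonempty subset of ℝ^s, let C ⊆ ℝ^s be a nonempty closed convex set, let x̄ ∈ Ω ∩ C, and suppose Ω is locally closed around x̄. Then the proximal normal cone N^p_C(x̄,Ω) with respect to C is a convex cone: it contains 0, is closed under multiplication by positive scalars, and is closed under convex combinations. -/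
open Set Metric Filter Topology
open scoped RealInnerProductSpace

variable {E : Type*} [NormedAddCommGroup E] [InnerProductSpace ℝ E]
variable {F' : Type*} [NormedAddCommGroup F'] [InnerProductSpace ℝ F']

/-! For `x ∈ S`, the points having `x` as a nearest point in `S` form the intersection of the
half-spaces `{y | ‖x - y‖ ≤ ‖u - y‖}`, `u ∈ S`, so `Π⁻¹(x, S)` is convex. Hence `N^p_C(x, Ω)` is
the cone generated by the convex set `(Π⁻¹(x, Ω ∩ C) ∩ C) - x`, which contains `0`. -/

theorem mem_projInv_iff {G : Type*} [NormedAddCommGroup G] {x y : G} {S : Set G} (hx : x ∈ S) :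
    y ∈ projInv x S ↔ ∀ u ∈ S, ‖x - y‖ ≤ ‖u - y‖ := by
  simp only [projInv, projSet, mem_ofPred_eq, hx, true_and, ← dist_eq_norm, dist_comm _ y]
  refine ⟨fun h u hu => h ▸ infDist_le_dist_of_mem hu, fun h => ?_⟩
  exact le_antisymm ((le_infDist ⟨x, hx⟩).2 h) (infDist_le_dist_of_mem hx)

theorem self_mem_projInv {G : Type*} [NormedAddCommGroup G] {x : G} {S : Set G} (hx : x ∈ S) :
    x ∈ projInv x S :=
  (mem_projInv_iff hx).2 fun u _ => by simp

theorem convex_setOf_norm_sub_le_norm_sub (x u : E) : Convex ℝ {y : E | ‖x - y‖ ≤ ‖u - y‖} := by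
  have hhalf : {y : E | ‖x - y‖ ≤ ‖u - y‖} = {y | ⟪u - x, y⟫ ≤ (‖u‖ ^ 2 - ‖x‖ ^ 2) / 2} := by
    ext y
    rw [mem_ofPred_eq, mem_ofPred_eq, ← sq_le_sq₀ (norm_nonneg _) (norm_nonneg _),
      norm_sub_sq_real, norm_sub_sq_real, inner_sub_left]
    constructor <;> intro h <;> linarith
  rw [hhalf]
  exact convex_halfSpace_le (innerₛₗ ℝ (u - x)).isLinear _

theorem convex_projInv (x : E) (S : Set E) : Convex ℝ (projInv x S) := by
  by_cases hx : x ∈ S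
  · have hbi : projInv x S = ⋂ u ∈ S, {y | ‖x - y‖ ≤ ‖u - y‖} := by
      ext y
      simp only [mem_projInv_iff hx, mem_iInter₂, mem_ofPred_eq]
    rw [hbi]
    exact convex_iInter₂ fun u _ => convex_setOf_norm_sub_le_norm_sub x u
  · convert convex_empty (𝕜 := ℝ)
    exact eq_empty_of_forall_notMem fun y hy => hx hy.1

theorem proxNC_eq_hull {C : Set E} (hC : Convex ℝ C) (Ω : Set E) (x : E) :
    proxNC C Ω x = ConvexCone.hull ℝ ((x + ·) ⁻¹' (projInv x (Ω ∩ C) ∩ C)) := by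
  ext v
  rw [SetLike.mem_coe, ConvexCone.mem_hull_of_convex
    (((convex_projInv x _).inter hC).translate_preimage_right x)]
  constructor
  · rintro ⟨t, ht, hv⟩
    refine ⟨t⁻¹, inv_pos.2 ht, (mem_smul_set_iff_inv_smul_mem₀ (inv_ne_zero ht.ne') _ _).2 ?_⟩
    rwa [inv_inv]
  · rintro ⟨r, hr, hv⟩
    exact ⟨r⁻¹, inv_pos.2 hr, (mem_smul_set_iff_inv_smul_mem₀ hr.ne' _ _).1 hv⟩

theorem stmt3_general {s : ℕ} (Ω C : Set (EuclideanSpace ℝ (Fin s))) (hCcv : Convex ℝ C)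
    (xb : EuclideanSpace ℝ (Fin s)) (hxb : xb ∈ Ω ∩ C) :
    (0 : EuclideanSpace ℝ (Fin s)) ∈ proxNC C Ω xb ∧
    (∀ v ∈ proxNC C Ω xb, ∀ l : ℝ, 0 < l → l • v ∈ proxNC C Ω xb) ∧
    Convex ℝ (proxNC C Ω xb) := by
  rw [proxNC_eq_hull hCcv]
  refine ⟨ConvexCone.subset_hull ?_, fun v hv l hl => ConvexCone.smul_mem _ hl hv,
    ConvexCone.convex _⟩
  simpa using ⟨self_mem_projInv hxb, hxb.2⟩

/-- Proposition 1(iii): the proximal normal cone with respect to a set is a convex cone. -/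
theorem stmt3 {s : ℕ} (Ω C : Set (EuclideanSpace ℝ (Fin s))) (hΩne : Ω.Nonempty)
    (hCne : C.Nonempty) (hCcl : IsClosed C) (hCcv : Convex ℝ C)
    (xb : EuclideanSpace ℝ (Fin s)) (hxb : xb ∈ Ω ∩ C)
    (hloc : ∃ r > (0 : ℝ), IsClosed (Ω ∩ Metric.closedBall xb r)) :
    (0 : EuclideanSpace ℝ (Fin s)) ∈ proxNC C Ω xb ∧
    (∀ v ∈ proxNC C Ω xb, ∀ l : ℝ, 0 < l → l • v ∈ proxNC C Ω xb) ∧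
    Convex ℝ (proxNC C Ω xb) :=
  stmt3_general Ω C hCcv xb hxb
end

section
/- Let C ⊆ ℝ^n be a nonempty closed convex set, F : ℝ^n ⇒ ℝ^m a set-valued mapping, x̄ ∈ C, ȳ ∈ F(x̄), and suppose gph F is locally closed around (x̄,ȳ). If there is κ ≥ 0 such that ‖x*‖ ≤ κ‖y*‖ for every y* ∈ ℝ^m and every x* ∈ D*_C F(x̄,ȳ)(y*), then for every κ̃ > κ, F has the Aubin property with respect to C around (x̄,ȳ) with constant κ̃, i.e. there exist neighborhoods U of x̄ and V of ȳ such that F(u) ∩ V ⊆ F(x) + κ̃‖u − x‖𝔹 for all x,u ∈ C ∩ U. -/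
/-!
The coderivative bound propagates, by compactness of the unit sphere, to a uniform bound
`‖v₁‖ ≤ μ‖v₂‖` (with `κ < μ < κ̃`) for the proximal normals to `gph F_C` relative to `C × ℝ^m`
at all graph points near `(x̄, ȳ)`. Given `x, u ∈ C` near `x̄` and `y ∈ F(u)` near `ȳ`, minimize
`φ(p) = √(‖p₂ - y‖² + ε²) + l‖p₁ - x‖` (with `μ < l < κ̃` and `ε` proportional to `‖u - x‖`) over
the compact part of `gph F_C` near `(x̄, ȳ)`. If a minimizer `z` had `z₁ ≠ x`, then `-∇φ(z)` would
be a proximal normal at `z` (`φ` has a quadratic upper bound around `z`, and moving towards `x`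
stays in `C` by convexity) with `‖v₁‖ = l > μ ≥ μ‖v₂‖`, contradicting the uniform bound. Hence
`z₁ = x`, and `φ(z) ≤ φ(u, y) = ε + l‖u - x‖` yields `‖z₂ - y‖ ≤ κ̃‖u - x‖`.
-/

open Set Metric Filter Topology
open scoped RealInnerProductSpace

variable {E : Type*} [NormedAddCommGroup E] [InnerProductSpace ℝ E]
variable {F' : Type*} [NormedAddCommGroup F'] [InnerProductSpace ℝ F']

/-- A pair `(x,y)` as an element of the `L²` (Euclidean) product. -/
noncomputable def toL2 (x : E) (y : F') : WithLp 2 (E × F') :=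
  (WithLp.equiv 2 (E × F')).symm (x, y)

/-- The graph of a set-valued map, inside the `L²` product. -/
def gphL2 (F : E → Set F') : Set (WithLp 2 (E × F')) :=
  {p | ((WithLp.equiv 2 (E × F')) p).2 ∈ F ((WithLp.equiv 2 (E × F')) p).1}

/-- The cylinder `C × ℝ^m` inside the `L²` product. -/
def cylL2 (C : Set E) : Set (WithLp 2 (E × F')) :=
  {p | ((WithLp.equiv 2 (E × F')) p).1 ∈ C}

/-- The limiting coderivative of `F` at `(xb,yb)` with respect to `C`:
`D*_C F(xb,yb)(y*) = {x* | (x*,-y*) ∈ N_{C×ℝ^m}((xb,yb), gph F_C)}`. -/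
noncomputable def coderivWRT (C : Set E) (F : E → Set F') (xb : E) (yb : F')
    (ystar : F') : Set E :=
  {xstar | toL2 xstar (-ystar) ∈ limNC (cylL2 C) (gphL2 F ∩ cylL2 C) (toL2 xb yb)}

/-- `F` has the Aubin property with respect to `C` around `(xb,yb)` with constant `k`:
there are neighborhoods `U` of `xb` and `V` of `yb` with
`F(u) ∩ V ⊆ F(x) + k‖u−x‖·𝔹` for all `x,u ∈ C ∩ U`. -/
def AubinWRT (C : Set E) (F : E → Set F') (xb : E) (yb : F') (k : ℝ) : Prop :=
  ∃ U ∈ nhds xb, ∃ V ∈ nhds yb, ∀ x ∈ C ∩ U, ∀ u ∈ C ∩ U, ∀ y ∈ F u ∩ V,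
    ∃ y' ∈ F x, ‖y - y'‖ ≤ k * ‖u - x‖

theorem sqrt_sq_add_le_add_div {a b : ℝ} (ha : 0 < a) (hab : 0 ≤ a ^ 2 + b) :
    √(a ^ 2 + b) ≤ a + b / (2 * a) := by
  have hsq : (a + b / (2 * a)) ^ 2 = a ^ 2 + b + (b / (2 * a)) ^ 2 := by field_simp; ring
  have hnonneg : 0 ≤ a + b / (2 * a) := by
    rw [show a + b / (2 * a) = (2 * a ^ 2 + b) / (2 * a) by field_simp]
    have : 0 ≤ 2 * a ^ 2 + b := by nlinarith
    positivity
  exact Real.sqrt_le_iff.mpr ⟨hnonneg, by nlinarith [sq_nonneg (b / (2 * a))]⟩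

theorem sqrt_norm_add_sq_add_le (a h : E) {e : ℝ} (he : 0 ≤ e) (hg : 0 < √(‖a‖ ^ 2 + e)) :
    √(‖a + h‖ ^ 2 + e) ≤ √(‖a‖ ^ 2 + e) + ⟪a, h⟫ / √(‖a‖ ^ 2 + e) +
      ‖h‖ ^ 2 / (2 * √(‖a‖ ^ 2 + e)) := by
  set g := √(‖a‖ ^ 2 + e)
  have hexp : ‖a + h‖ ^ 2 + e = g ^ 2 + (2 * ⟪a, h⟫ + ‖h‖ ^ 2) := by
    rw [norm_add_sq_real, Real.sq_sqrt (by positivity)]; ring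
  calc √(‖a + h‖ ^ 2 + e) = √(g ^ 2 + (2 * ⟪a, h⟫ + ‖h‖ ^ 2)) := by rw [hexp]
    _ ≤ g + (2 * ⟪a, h⟫ + ‖h‖ ^ 2) / (2 * g) := sqrt_sq_add_le_add_div hg (hexp ▸ by positivity)
    _ = g + ⟪a, h⟫ / g + ‖h‖ ^ 2 / (2 * g) := by field_simp; ring

theorem norm_add_le_add_inner_div {a : E} (ha : a ≠ 0) (h : E) :
    ‖a + h‖ ≤ ‖a‖ + ⟪a, h⟫ / ‖a‖ + ‖h‖ ^ 2 / (2 * ‖a‖) := by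
  simpa using sqrt_norm_add_sq_add_le a h le_rfl (by simpa using ha)

theorem mem_projSet_of_forall_norm_le {X : Type*} [NormedAddCommGroup X] {S : Set X} {x u : X}
    (hu : u ∈ S) (h : ∀ z ∈ S, ‖u - x‖ ≤ ‖z - x‖) : u ∈ projSet x S := by
  refine ⟨hu, le_antisymm ?_ ?_⟩
  · refine (le_infDist ⟨u, hu⟩).mpr fun z hz => ?_
    rw [dist_comm, dist_eq_norm]
    exact h z hz
  · simpa [dist_eq_norm, norm_sub_rev] using infDist_le_dist_of_mem (x := x) hu

theorem IsClosed.inter_closedBall_of_le {X : Type*} [PseudoMetricSpace X] {s : Set X} {z : X}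
    {r ρ : ℝ} (hs : IsClosed (s ∩ closedBall z r)) (hρ : ρ ≤ r) :
    IsClosed (s ∩ closedBall z ρ) := by
  rw [← inter_eq_right.mpr (closedBall_subset_closedBall hρ), ← inter_assoc]
  exact hs.inter isClosed_closedBall

theorem mem_projSet_add_smul_of_inner_le {S : Set E} {z v : E} (hz : z ∈ S) {c R t : ℝ}
    (ht : 0 < t) (htc : 2 * t * c ≤ 1) (htv : 2 * t * ‖v‖ ≤ R)
    (hv : ∀ w ∈ S, ‖w - z‖ ≤ R → ⟪v, w - z⟫ ≤ c * ‖w - z‖ ^ 2) :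
    z ∈ projSet (z + t • v) S := by
  refine mem_projSet_of_forall_norm_le hz fun w hw => ?_
  have htv' : ‖t • v‖ = t * ‖v‖ := by rw [norm_smul, Real.norm_of_nonneg ht.le]
  rw [show z - (z + t • v) = -(t • v) by abel, norm_neg, htv',
    show w - (z + t • v) = (w - z) - t • v by abel]
  rcases le_or_gt ‖w - z‖ R with hR | hR
  · have hinner := hv w hw hR
    have hsq : (t * ‖v‖) ^ 2 ≤ ‖(w - z) - t • v‖ ^ 2 := by
      rw [norm_sub_sq_real, real_inner_smul_right, real_inner_comm, htv']
      nlinarith [mul_nonneg (sub_nonneg.mpr htc) (sq_nonneg ‖w - z‖)]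
    exact (pow_le_pow_iff_left₀ (by positivity) (norm_nonneg _) two_ne_zero).mp hsq
  · linarith [norm_sub_norm_le (w - z) (t • v)]

theorem smul_mem_proxNC {C Ω : Set E} {x v : E} (hv : v ∈ proxNC C Ω x) {s : ℝ} (hs : 0 < s) :
    s • v ∈ proxNC C Ω x := by
  obtain ⟨t, ht, hmem⟩ := hv
  exact ⟨t / s, div_pos ht hs, by rwa [smul_smul, div_mul_cancel₀ _ hs.ne']⟩

theorem eventually_nhdsGT_zero_mul_lt (a : ℝ) {b : ℝ} (hb : 0 < b) :
    ∀ᶠ t in 𝓝[>] (0 : ℝ), t * a < b :=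
  (((continuous_mul_const a).tendsto' 0 0 (zero_mul a)).eventually_lt_const hb).filter_mono
    nhdsWithin_le_nhds

theorem mem_proxNC_of_inner_le {C Ω : Set E} {z v : E} (hz : z ∈ Ω ∩ C) {c R : ℝ} (hR : 0 < R)
    (hv : ∀ w ∈ Ω ∩ C, ‖w - z‖ ≤ R → ⟪v, w - z⟫ ≤ c * ‖w - z‖ ^ 2)
    (hC : ∀ᶠ t in 𝓝[>] (0 : ℝ), z + t • v ∈ C) : v ∈ proxNC C Ω z := by
  obtain ⟨t, htc, htv, htC, ht⟩ := ((eventually_nhdsGT_zero_mul_lt (2 * c) one_pos).and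
    ((eventually_nhdsGT_zero_mul_lt (2 * ‖v‖) hR).and (hC.and self_mem_nhdsWithin))).exists
  exact ⟨t, ht, mem_projSet_add_smul_of_inner_le hz ht (by linarith) (by linarith) hv, htC⟩

section Product

variable {α β : Type*}

@[simp] theorem toL2_fst (x : α) (y : β) : (toL2 x y).fst = x := rfl

@[simp] theorem toL2_snd (x : α) (y : β) : (toL2 x y).snd = y := rfl

@[simp] theorem toL2_fst_snd (p : WithLp 2 (α × β)) : toL2 p.fst p.snd = p := rfl

theorem WithLp.prod_norm_le_norm_fst_add_norm_snd [NormedAddCommGroup α] [NormedAddCommGroup β]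
    (p : WithLp 2 (α × β)) : ‖p‖ ≤ ‖p.fst‖ + ‖p.snd‖ := by
  have h := WithLp.prod_norm_sq_eq_of_L2 p
  nlinarith [norm_nonneg p, norm_nonneg p.fst, norm_nonneg p.snd,
    mul_nonneg (norm_nonneg p.fst) (norm_nonneg p.snd)]

theorem dist_toL2_le [NormedAddCommGroup α] [NormedAddCommGroup β] (x x' : α) (y y' : β) :
    dist (toL2 x y) (toL2 x' y') ≤ dist x x' + dist y y' := by
  simpa [dist_eq_norm] using WithLp.prod_norm_le_norm_fst_add_norm_snd (toL2 x y - toL2 x' y')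

theorem IsClosed.cylL2 [TopologicalSpace α] [TopologicalSpace β] {C : Set α} (hC : IsClosed C) :
    IsClosed (cylL2 C : Set (WithLp 2 (α × β))) :=
  hC.preimage (WithLp.continuous_fst _ _ _)

end Product

theorem eventually_add_smul_mem_cylL2 {C : Set E} (hC : Convex ℝ C) {z v : WithLp 2 (E × F')}
    {x : E} (hz : z.fst ∈ C) (hx : x ∈ C) {s : ℝ} (hs : 0 ≤ s) (hv : v.fst = s • (x - z.fst)) :
    ∀ᶠ t in 𝓝[>] (0 : ℝ), z + t • v ∈ cylL2 C := by
  filter_upwards [eventually_nhdsGT_zero_mul_lt s one_pos, self_mem_nhdsWithin] with t hts ht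
  change (z + t • v).fst ∈ C
  rw [WithLp.add_fst, WithLp.smul_fst, hv, smul_smul]
  exact hC.add_smul_sub_mem hz hx ⟨mul_nonneg (le_of_lt ht) hs, hts.le⟩

section Coderivative

variable [FiniteDimensional ℝ E] [FiniteDimensional ℝ F']

theorem eventually_forall_proxNC_norm_fst_le {C : Set E} {F : E → Set F'} {xb : E} {yb : F'}
    {κ μ : ℝ} (hκ : 0 ≤ κ) (hμ : κ < μ)
    (hbound : ∀ ystar, ∀ xstar ∈ coderivWRT C F xb yb ystar, ‖xstar‖ ≤ κ * ‖ystar‖) :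
    ∀ᶠ z in 𝓝 (toL2 xb yb), z ∈ gphL2 F ∩ cylL2 C →
      ∀ v ∈ proxNC (cylL2 C) (gphL2 F ∩ cylL2 C) z, ‖v.fst‖ ≤ μ * ‖v.snd‖ := by
  by_contra hcon
  obtain ⟨zs, hzs, hbad⟩ := frequently_iff_seq_forall.mp (not_eventually.mp hcon)
  simp only [Classical.not_imp, not_forall, not_le] at hbad
  choose hzS vs hvs hlt using hbad
  have hvs0 : ∀ k, 0 < ‖vs k‖ := fun k => norm_pos_iff.mpr fun h0 => by
    simpa [h0] using (hlt k).trans_le' (mul_nonneg (hκ.trans hμ.le) (norm_nonneg (vs k).snd))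
  -- the failure of the bound is invariant under positive scaling, so normalize
  set ws := fun k => ‖vs k‖⁻¹ • vs k
  have hws : ∀ k, ws k ∈ sphere (0 : WithLp 2 (E × F')) 1 := fun k => by
    simp [ws, norm_smul, (hvs0 k).ne']
  have hwlt : ∀ k, μ * ‖(ws k).snd‖ ≤ ‖(ws k).fst‖ := fun k => by
    simp only [ws, WithLp.smul_fst, WithLp.smul_snd, norm_smul, norm_inv, norm_norm]
    rw [mul_left_comm]
    exact mul_le_mul_of_nonneg_left (hlt k).le (by positivity)
  obtain ⟨a, ha, φ, hφ, hlim⟩ := (isCompact_sphere _ _).tendsto_subseq hws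
  have haN : a ∈ limNC (cylL2 C) (gphL2 F ∩ cylL2 C) (toL2 xb yb) :=
    ⟨zs ∘ φ, ws ∘ φ, fun j => ⟨hzS (φ j), (hzS (φ j)).2⟩, hzs.comp hφ.tendsto_atTop,
      fun j => smul_mem_proxNC (hvs (φ j)) (inv_pos.mpr (hvs0 (φ j))), hlim⟩
  have hκa : ‖a.fst‖ ≤ κ * ‖a.snd‖ := by
    simpa using hbound (-a.snd) a.fst (by simpa [coderivWRT] using haN)
  have hμa : μ * ‖a.snd‖ ≤ ‖a.fst‖ :=
    (isClosed_le (f := fun p : WithLp 2 (E × F') => μ * ‖p.snd‖) (g := fun p => ‖p.fst‖)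
      (by fun_prop) (by fun_prop)).mem_of_tendsto hlim
      (Eventually.of_forall fun j => hwlt (φ j))
  have hsnd : ‖a.snd‖ = 0 :=
    le_antisymm (nonpos_of_mul_nonpos_right (by linarith) (sub_pos.mpr hμ)) (norm_nonneg _)
  have hfst : ‖a.fst‖ = 0 := le_antisymm (by simpa [hsnd] using hκa) (norm_nonneg _)
  simpa [mem_sphere_zero_iff_norm.mp ha, hsnd, hfst] using WithLp.prod_norm_sq_eq_of_L2 a

end Coderivative

section Penalty

variable {α β : Type*} [NormedAddCommGroup α] [NormedAddCommGroup β]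

/-- `ε > 0` makes the square-root term smooth, also where `p.snd = y`. -/
noncomputable def penalty (l ε : ℝ) (x : α) (y : β) (p : WithLp 2 (α × β)) : ℝ :=
  √(‖p.snd - y‖ ^ 2 + ε ^ 2) + l * ‖p.fst - x‖

/-- Minus the gradient of `penalty l ε x y` at `p`. -/
noncomputable def penaltyDescent [NormedSpace ℝ α] [NormedSpace ℝ β] (l ε : ℝ) (x : α) (y : β)
    (p : WithLp 2 (α × β)) : WithLp 2 (α × β) :=
  toL2 ((l / ‖p.fst - x‖) • (x - p.fst)) ((√(‖p.snd - y‖ ^ 2 + ε ^ 2))⁻¹ • (y - p.snd))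

variable {l ε : ℝ} {x : α} {y : β}

theorem continuous_penalty : Continuous (penalty l ε x y) := by
  unfold penalty; fun_prop

theorem penalty_toL2 (hε : 0 ≤ ε) (u : α) : penalty l ε x y (toL2 u y) = ε + l * ‖u - x‖ := by
  simp [penalty, Real.sqrt_sq hε]

theorem dist_toL2_le_penalty (hl : 0 < l) (p : WithLp 2 (α × β)) :
    dist p (toL2 x y) ≤ (1 + l⁻¹) * penalty l ε x y p := by
  have hsnd : ‖p.snd - y‖ ≤ √(‖p.snd - y‖ ^ 2 + ε ^ 2) :=
    Real.le_sqrt_of_sq_le (le_add_of_nonneg_right (sq_nonneg ε))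
  have hfst : ‖p.fst - x‖ = l⁻¹ * (l * ‖p.fst - x‖) := by field_simp
  calc dist p (toL2 x y) ≤ ‖p.fst - x‖ + ‖p.snd - y‖ := by
        simpa [dist_eq_norm] using WithLp.prod_norm_le_norm_fst_add_norm_snd (p - toL2 x y)
    _ ≤ (1 + l⁻¹) * penalty l ε x y p := by
        rw [hfst]; unfold penalty
        nlinarith [inv_pos.mpr hl, Real.sqrt_nonneg (‖p.snd - y‖ ^ 2 + ε ^ 2),
          mul_nonneg hl.le (norm_nonneg (p.fst - x))]

theorem norm_penaltyDescent_fst [NormedSpace ℝ α] [NormedSpace ℝ β] (hl : 0 ≤ l)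
    {p : WithLp 2 (α × β)} (hp : p.fst ≠ x) :
    ‖(penaltyDescent l ε x y p).fst‖ = l := by
  have : ‖p.fst - x‖ ≠ 0 := norm_ne_zero_iff.mpr (sub_ne_zero.mpr hp)
  simp [penaltyDescent, norm_smul, abs_of_nonneg hl, norm_sub_rev x, this]

theorem norm_penaltyDescent_snd_lt [NormedSpace ℝ α] [NormedSpace ℝ β] (hε : ε ≠ 0)
    (p : WithLp 2 (α × β)) :
    ‖(penaltyDescent l ε x y p).snd‖ < 1 := by
  have hg : ‖y - p.snd‖ < √(‖p.snd - y‖ ^ 2 + ε ^ 2) := by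
    rw [norm_sub_rev]
    exact Real.lt_sqrt_of_sq_lt (lt_add_of_pos_right _ (by positivity))
  have hg0 : 0 < √(‖p.snd - y‖ ^ 2 + ε ^ 2) := (norm_nonneg _).trans_lt hg
  simpa [penaltyDescent, norm_smul, abs_of_pos hg0, inv_mul_lt_one₀ hg0] using hg

end Penalty

theorem exists_inner_penaltyDescent_le {l ε : ℝ} {x : E} {y : F'} (hl : 0 ≤ l) (hε : ε ≠ 0)
    {p : WithLp 2 (E × F')} (hp : p.fst ≠ x) :
    ∃ c, ∀ z, penalty l ε x y p ≤ penalty l ε x y z →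
      ⟪penaltyDescent l ε x y p, z - p⟫ ≤ c * ‖z - p‖ ^ 2 := by
  set a₁ := p.fst - x
  set a₂ := p.snd - y
  set g := √(‖a₂‖ ^ 2 + ε ^ 2)
  have ha₁ : a₁ ≠ 0 := sub_ne_zero.mpr hp
  have ha₁' : 0 < ‖a₁‖ := norm_pos_iff.mpr ha₁
  have hg : 0 < g := Real.sqrt_pos.mpr (by positivity)
  refine ⟨l / (2 * ‖a₁‖) + 1 / (2 * g), fun z hz => ?_⟩
  set h₁ := z.fst - p.fst
  set h₂ := z.snd - p.snd
  have e₁ : l * ‖z.fst - x‖ ≤ l * ‖a₁‖ + l * ⟪a₁, h₁⟫ / ‖a₁‖ + l * ‖h₁‖ ^ 2 / (2 * ‖a₁‖) := by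
    rw [← sub_add_sub_cancel' p.fst x z.fst]
    simpa only [mul_add, mul_div_assoc] using
      mul_le_mul_of_nonneg_left (norm_add_le_add_inner_div ha₁ h₁) hl
  have e₂ : √(‖z.snd - y‖ ^ 2 + ε ^ 2) ≤ g + ⟪a₂, h₂⟫ / g + ‖h₂‖ ^ 2 / (2 * g) := by
    rw [← sub_add_sub_cancel' p.snd y z.snd]
    exact sqrt_norm_add_sq_add_le a₂ h₂ (sq_nonneg ε) hg
  have hinner : ⟪penaltyDescent l ε x y p, z - p⟫ = -(l * ⟪a₁, h₁⟫ / ‖a₁‖ + ⟪a₂, h₂⟫ / g) := by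
    simp only [penaltyDescent, WithLp.prod_inner_apply, WithLp.ofLp_fst, WithLp.ofLp_snd,
      toL2_fst, toL2_snd, WithLp.sub_fst, WithLp.sub_snd, real_inner_smul_left]
    rw [← neg_sub p.fst x, ← neg_sub p.snd y, inner_neg_left, inner_neg_left]
    ring
  have hq₁ : l * ‖h₁‖ ^ 2 / (2 * ‖a₁‖) ≤ l * ‖z - p‖ ^ 2 / (2 * ‖a₁‖) := by
    gcongr; exact WithLp.norm_fst_le _ (z - p)
  have hq₂ : ‖h₂‖ ^ 2 / (2 * g) ≤ ‖z - p‖ ^ 2 / (2 * g) := by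
    gcongr; exact WithLp.norm_snd_le _ (z - p)
  unfold penalty at hz
  rw [hinner]
  linarith [show (l / (2 * ‖a₁‖) + 1 / (2 * g)) * ‖z - p‖ ^ 2 =
    l * ‖z - p‖ ^ 2 / (2 * ‖a₁‖) + ‖z - p‖ ^ 2 / (2 * g) by ring]

theorem fst_eq_of_forall_penalty_le {C : Set E} (hC : Convex ℝ C) {Ω : Set (WithLp 2 (E × F'))}
    {l ε μ R : ℝ} {x : E} {y : F'} (hx : x ∈ C) (hμ : 0 ≤ μ) (hμl : μ < l) (hε : ε ≠ 0)
    (hR : 0 < R) {z : WithLp 2 (E × F')} (hz : z ∈ Ω ∩ cylL2 C)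
    (hmin : ∀ w ∈ Ω ∩ cylL2 C, ‖w - z‖ ≤ R → penalty l ε x y z ≤ penalty l ε x y w)
    (hprox : ∀ v ∈ proxNC (cylL2 C) Ω z, ‖v.fst‖ ≤ μ * ‖v.snd‖) : z.fst = x := by
  by_contra hzx
  have hl : 0 ≤ l := hμ.trans hμl.le
  obtain ⟨c, hc⟩ := exists_inner_penaltyDescent_le (y := y) hl hε hzx
  have hv : penaltyDescent l ε x y z ∈ proxNC (cylL2 C) Ω z :=
    mem_proxNC_of_inner_le hz hR (fun w hw hwz => hc w (hmin w hw hwz))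
      (eventually_add_smul_mem_cylL2 hC hz.2 hx (div_nonneg hl (norm_nonneg _)) rfl)
  have hbound := hprox _ hv
  rw [norm_penaltyDescent_fst hl hzx] at hbound
  nlinarith [norm_penaltyDescent_snd_lt (l := l) (x := x) (y := y) hε z]

theorem le_mul_of_sqrt_sq_add_sq_le {a d l k σ : ℝ} (ha : 0 ≤ a) (hd : 0 ≤ d) (hk : 0 ≤ k)
    (hσ : l ^ 2 + 2 * σ * l = k ^ 2) (h : √(a ^ 2 + (σ * d) ^ 2) ≤ σ * d + l * d) :
    a ≤ k * d := by
  have hsq : a ^ 2 ≤ (k * d) ^ 2 := by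
    linear_combination (Real.sqrt_le_iff.mp h).2 + d ^ 2 * hσ
  exact (pow_le_pow_iff_left₀ ha (by positivity) two_ne_zero).mp hsq

theorem exists_mem_penalty_le [FiniteDimensional ℝ E] [FiniteDimensional ℝ F'] {C : Set E}
    (hCcl : IsClosed C) (hCcv : Convex ℝ C) {F : E → Set F'} {z₀ : WithLp 2 (E × F')}
    {ρ μ l ε : ℝ} (hρ : 0 < ρ) (hK : IsClosed (gphL2 F ∩ closedBall z₀ ρ))
    (hprox : ∀ z ∈ gphL2 F ∩ cylL2 C, dist z z₀ ≤ ρ →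
      ∀ v ∈ proxNC (cylL2 C) (gphL2 F ∩ cylL2 C) z, ‖v.fst‖ ≤ μ * ‖v.snd‖)
    (hμ : 0 ≤ μ) (hμl : μ < l) (hε : 0 < ε) {x u : E} {y : F'} (hx : x ∈ C) (hu : u ∈ C)
    (hy : y ∈ F u) (huy : dist (toL2 u y) z₀ ≤ ρ)
    (hxy : (1 + l⁻¹) * (ε + l * ‖u - x‖) + dist (toL2 x y) z₀ ≤ ρ / 2) :
    ∃ y' ∈ F x, penalty l ε x y (toL2 x y') ≤ ε + l * ‖u - x‖ := by
  have hl : 0 < l := hμ.trans_lt hμl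
  have hKc : IsCompact (gphL2 F ∩ cylL2 C ∩ closedBall z₀ ρ) := by
    refine (isCompact_closedBall z₀ ρ).of_isClosed_subset ?_ inter_subset_right
    rw [inter_right_comm]
    exact hK.inter hCcl.cylL2
  have huyK : toL2 u y ∈ gphL2 F ∩ cylL2 C ∩ closedBall z₀ ρ := ⟨⟨hy, hu⟩, huy⟩
  obtain ⟨z, ⟨hzS, -⟩, hzmin⟩ :=
    hKc.exists_isMinOn ⟨_, huyK⟩ (continuous_penalty (x := x) (y := y)).continuousOn
  have hzval : penalty l ε x y z ≤ ε + l * ‖u - x‖ := (hzmin huyK).trans_eq (penalty_toL2 hε.le u)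
  have hz₀ : dist z z₀ ≤ ρ / 2 := calc
    dist z z₀ ≤ dist z (toL2 x y) + dist (toL2 x y) z₀ := dist_triangle _ _ _
    _ ≤ (1 + l⁻¹) * (ε + l * ‖u - x‖) + dist (toL2 x y) z₀ := by
      gcongr
      exact (dist_toL2_le_penalty hl z).trans (by gcongr)
    _ ≤ ρ / 2 := hxy
  have hzx : z.fst = x := by
    refine fst_eq_of_forall_penalty_le hCcv hx hμ hμl hε.ne' (half_pos hρ) ⟨hzS, hzS.2⟩
      (fun w hw hwz => hzmin ⟨hw.1, ?_⟩) (hprox z hzS (hz₀.trans (half_le_self hρ.le)))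
    rw [mem_closedBall]
    linarith [dist_triangle w z z₀, dist_eq_norm w z]
  rw [← hzx] at hzval ⊢
  exact ⟨z.snd, hzS.1, by rwa [toL2_fst_snd]⟩

theorem aubinWRT_of_eventually_proxNC_norm_fst_le [FiniteDimensional ℝ E] [FiniteDimensional ℝ F']
    {C : Set E} (hCcl : IsClosed C) (hCcv : Convex ℝ C) {F : E → Set F'} {xb : E} {yb : F'}
    (hloc : ∃ r > (0 : ℝ), IsClosed (gphL2 F ∩ closedBall (toL2 xb yb) r)) {μ k : ℝ}
    (hμ : 0 ≤ μ) (hμk : μ < k)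
    (hprox : ∀ᶠ z in 𝓝 (toL2 xb yb), z ∈ gphL2 F ∩ cylL2 C →
      ∀ v ∈ proxNC (cylL2 C) (gphL2 F ∩ cylL2 C) z, ‖v.fst‖ ≤ μ * ‖v.snd‖) :
    AubinWRT C F xb yb k := by
  obtain ⟨r, hr, hclosed⟩ := hloc
  obtain ⟨δ, hδ, hδprox⟩ := Metric.eventually_nhds_iff.mp hprox
  set ρ := min r (δ / 2)
  have hρ : 0 < ρ := lt_min hr (half_pos hδ)
  obtain ⟨l, hμl, hlk⟩ := exists_between hμk
  have hl : 0 < l := hμ.trans_lt hμl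
  -- `σ` is chosen so that `(σ d + l d)² - (σ d)² = (k d)²`
  obtain ⟨σ, hσ, hσl⟩ : ∃ σ > 0, l ^ 2 + 2 * σ * l = k ^ 2 :=
    ⟨(k ^ 2 - l ^ 2) / (2 * l), div_pos (by nlinarith) (by positivity), by field_simp; ring⟩
  set A := (1 + l⁻¹) * (σ + l)
  have hA : 0 < A := mul_pos (by linarith [inv_pos.mpr hl]) (by linarith)
  obtain ⟨η, hη, hηρ⟩ := exists_pos_mul_lt (half_pos hρ) (2 * (A + 1))
  refine ⟨ball xb η, ball_mem_nhds _ hη, ball yb η, ball_mem_nhds _ hη, ?_⟩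
  rintro x ⟨hx, hxU⟩ u ⟨hu, huU⟩ y ⟨hy, hyV⟩
  rcases eq_or_ne u x with rfl | hux
  · exact ⟨y, hy, by simp⟩
  rw [mem_ball] at hxU huU hyV
  have hd : 0 < ‖u - x‖ := norm_pos_iff.mpr (sub_ne_zero.mpr hux)
  have hAd : A * ‖u - x‖ ≤ A * (2 * η) := by
    gcongr
    linarith [dist_triangle_right u x xb, dist_eq_norm u x]
  have hxy := dist_toL2_le x xb y yb
  have huy := dist_toL2_le u xb y yb
  obtain ⟨y', hy', hpen⟩ := exists_mem_penalty_le (l := l) hCcl hCcv hρ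
    (hclosed.inter_closedBall_of_le (min_le_left _ _))
    (fun z hz hzρ => hδprox (hzρ.trans_lt ((min_le_right _ _).trans_lt (half_lt_self hδ))) hz)
    hμ hμl (mul_pos hσ hd) hx hu hy (by linarith [mul_pos hA hη]) (by
      rw [show (1 + l⁻¹) * (σ * ‖u - x‖ + l * ‖u - x‖) = A * ‖u - x‖ by ring]
      linarith)
  refine ⟨y', hy', le_mul_of_sqrt_sq_add_sq_le (norm_nonneg _) hd.le (hl.le.trans hlk.le) hσl ?_⟩
  simpa [penalty, norm_sub_rev y'] using hpen

theorem stmt9_general {n m : ℕ} (C : Set (EuclideanSpace ℝ (Fin n)))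
    (hCcl : IsClosed C) (hCcv : Convex ℝ C)
    (F : EuclideanSpace ℝ (Fin n) → Set (EuclideanSpace ℝ (Fin m))) (xb : EuclideanSpace ℝ (Fin n)) (yb : EuclideanSpace ℝ (Fin m))
    (hloc : ∃ r > (0 : ℝ), IsClosed (gphL2 F ∩ Metric.closedBall (toL2 xb yb) r))
    (κ : ℝ) (hκ : 0 ≤ κ)
    (hbound : ∀ ystar : EuclideanSpace ℝ (Fin m), ∀ xstar ∈ coderivWRT C F xb yb ystar,
      ‖xstar‖ ≤ κ * ‖ystar‖) :
    ∀ κt : ℝ, κ < κt → AubinWRT C F xb yb κt := by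
  intro κt hκt
  have hμ : κ < (κ + κt) / 2 := by linarith
  exact aubinWRT_of_eventually_proxNC_norm_fst_le hCcl hCcv hloc (hκ.trans hμ.le) (by linarith)
    (eventually_forall_proxNC_norm_fst_le hκ hμ hbound)

/-- Theorem 1, sufficiency: the coderivative bound `‖x*‖ ≤ κ‖y*‖` yields the Aubin
property with respect to `C` with any constant `κ̃ > κ`. -/
theorem stmt9 {n m : ℕ} (C : Set (EuclideanSpace ℝ (Fin n)))
    (hCne : C.Nonempty) (hCcl : IsClosed C) (hCcv : Convex ℝ C)
    (F : EuclideanSpace ℝ (Fin n) → Set (EuclideanSpace ℝ (Fin m))) (xb : EuclideanSpace ℝ (Fin n)) (yb : EuclideanSpace ℝ (Fin m))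
    (hgph : yb ∈ F xb) (hxbC : xb ∈ C)
    (hloc : ∃ r > (0 : ℝ), IsClosed (gphL2 F ∩ Metric.closedBall (toL2 xb yb) r))
    (κ : ℝ) (hκ : 0 ≤ κ)
    (hbound : ∀ ystar : EuclideanSpace ℝ (Fin m), ∀ xstar ∈ coderivWRT C F xb yb ystar,
      ‖xstar‖ ≤ κ * ‖ystar‖) :
    ∀ κt : ℝ, κ < κt → AubinWRT C F xb yb κt :=
  stmt9_general C hCcl hCcv F xb yb hloc κ hκ hbound
end
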